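/- arXiv:1805.11702 — 3 statements merged into one kernel-verified Lean document; each statement's English description precedes it below -/
import Mathlib

section
/- Let X be a topological space, let 𝕜 be a topological field whose topology is T1, and for i = 1, …, n let Aᵢ : X → Matrix(mᵢ, m, 𝕜) be matrix-valued maps all of whose entries are continuous. Then the function X → ℕ sending x to the 𝕜-dimension of the intersection ⋂ᵢ ker(Aᵢ(x)), where Aᵢ(x) is viewed as a linear map 𝕜^m → 𝕜^{mᵢ}, is upper semicontinuous. -/
/-!
The rank of a matrix is the size of its largest invertible square submatrix, and a given
square submatrix of a continuously varying matrix stays invertible near any point where it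
is invertible, because its determinant is continuous and `{0}ᶜ` is open in a T1 field.
So the rank of a continuously varying matrix is lower semicontinuous, and by rank–nullity
its kernel dimension is upper semicontinuous. The intersection of the kernels of the `Aᵢ`
is the kernel of the matrix stacking their rows.
-/

open Module Submodule Topology

lemma exists_linearIndependent_comp_fin {K V ι : Type*} [DivisionRing K] [AddCommGroup V]
    [Module K V] [Finite ι] (v : ι → V) {s : ℕ} (hs : finrank K (span K (Set.range v)) = s) :
    ∃ q : Fin s → ι, LinearIndependent K (v ∘ q) := by
  obtain ⟨κ, a, ha, hspan, hli⟩ := exists_linearIndependent' K v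
  have : Fintype κ := have := Finite.of_injective a ha; Fintype.ofFinite κ
  have hcard : Fintype.card κ = s := by rw [← hs, ← hspan, finrank_span_eq_card hli]
  exact ⟨a ∘ (Fintype.equivFinOfCardEq hcard).symm, hli.comp _ (Equiv.injective _)⟩

namespace Matrix

variable {K m n : Type*} [Field K] [Fintype n]

lemma card_le_rank_of_isUnit_submatrix {l : Type*} [Fintype l] [DecidableEq l]
    (A : Matrix m n K) {p : l → m} {q : l → n} (h : IsUnit (A.submatrix p q)) :
    Fintype.card l ≤ A.rank :=
  (rank_of_isUnit _ h).symm.trans_le (rank_submatrix_le A p q)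

lemma finrank_ker_mulVecLin (A : Matrix m n K) :
    finrank K (LinearMap.ker A.mulVecLin) = Fintype.card n - A.rank := by
  rw [rank, ← finrank_fintype_fun_eq_card K,
    ← LinearMap.finrank_range_add_finrank_ker A.mulVecLin, Nat.add_sub_cancel_left]

lemma iInf_ker_mulVecLin_eq_ker_sigma {R ι : Type*} [CommSemiring R] {κ : ι → Type*}
    (A : (i : ι) → Matrix (κ i) n R) :
    ⨅ i, LinearMap.ker (A i).mulVecLin =
      LinearMap.ker (Matrix.of fun p : (i : ι) × κ i => A p.1 p.2).mulVecLin := by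
  ext v
  simp only [mem_iInf, LinearMap.mem_ker, mulVecLin_apply, funext_iff, Sigma.forall]
  rfl

variable [Fintype m]

lemma exists_isUnit_submatrix_fin_rank (A : Matrix m n K) :
    ∃ (p : Fin A.rank → m) (q : Fin A.rank → n), IsUnit (A.submatrix p q) := by
  obtain ⟨q, hq⟩ := exists_linearIndependent_comp_fin A.col A.rank_eq_finrank_span_cols.symm
  have hrank : (A.submatrix id q).rank = A.rank := by
    rw [← rank_transpose, LinearIndependent.rank_matrix (M := (A.submatrix id q)ᵀ) hq,
      Fintype.card_fin]
  obtain ⟨p, hp⟩ := exists_linearIndependent_comp_fin (A.submatrix id q).row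
    ((A.submatrix id q).rank_eq_finrank_span_row.symm.trans hrank)
  exact ⟨p, q, linearIndependent_rows_iff_isUnit.mp hp⟩

variable {X : Type*} [TopologicalSpace X] [TopologicalSpace K] [IsTopologicalRing K]
  [T1Space K] {B : X → Matrix m n K}

lemma lowerSemicontinuous_rank (hB : Continuous B) :
    LowerSemicontinuous fun x => (B x).rank := by
  intro x₀ r (hr : r < (B x₀).rank)
  obtain ⟨p, q, hpq⟩ := (B x₀).exists_isUnit_submatrix_fin_rank
  have hdet : Continuous fun x => ((B x).submatrix p q).det := (hB.matrix_submatrix p q).matrix_det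
  filter_upwards [hdet.continuousAt.eventually_ne ((isUnit_iff_isUnit_det _).mp hpq).ne_zero]
    with x hx
  have hunit : IsUnit ((B x).submatrix p q) := (isUnit_iff_isUnit_det _).mpr hx.isUnit
  have hle := (B x).card_le_rank_of_isUnit_submatrix hunit
  rw [Fintype.card_fin] at hle
  exact hr.trans_le hle

lemma upperSemicontinuous_finrank_ker_mulVecLin (hB : Continuous B) :
    UpperSemicontinuous fun x => finrank K (LinearMap.ker (B x).mulVecLin) := by
  simp only [finrank_ker_mulVecLin]
  exact continuous_of_discreteTopology.comp_lowerSemicontinuous_antitone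
    (lowerSemicontinuous_rank hB) fun _ _ h => Nat.sub_le_sub_left h _

end Matrix

/-- Part (ii) of the semicontinuity lemma: for finitely many continuously varying
matrices `Aᵢ : X → Matrix(mᵢ, m, 𝕜)` over a topological field `𝕜` with T1 topology,
the function sending `x` to the dimension of `⋂ᵢ ker(Aᵢ(x)) ⊆ 𝕜^m` is upper
semicontinuous. -/
theorem ker_inter_dim_upperSemicontinuous
    {X : Type*} [TopologicalSpace X] {𝕜 : Type*} [Field 𝕜] [TopologicalSpace 𝕜]
    [IsTopologicalDivisionRing 𝕜] [T1Space 𝕜] {n m : ℕ} {m' : Fin n → ℕ}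
    (A : (i : Fin n) → X → Matrix (Fin (m' i)) (Fin m) 𝕜)
    (hA : ∀ i j l, Continuous fun x => A i x j l) :
    UpperSemicontinuous
      (fun x => Module.finrank 𝕜
        (⨅ i, LinearMap.ker (Matrix.mulVecLin (A i x)) : Submodule 𝕜 (Fin m → 𝕜))) := by
  have hB : Continuous fun x => Matrix.of fun p : (i : Fin n) × Fin (m' i) => A p.1 x p.2 :=
    continuous_matrix fun p l => hA p.1 p.2 l
  convert Matrix.upperSemicontinuous_finrank_ker_mulVecLin hB using 2 with x
  rw [Matrix.iInf_ker_mulVecLin_eq_ker_sigma]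
end

section
/- Let k be a field and let P₁, …, P₈ be eight distinct points of the projective plane P²(k) (given by nonzero representatives in k³, distinct as projective points) such that no three of the points are collinear (for no three of them does a nonzero homogeneous linear form in k[x₀,x₁,x₂] vanish at all three) and no six of the points lie on a conic (for no six of them does a nonzero homogeneous quadratic form in k[x₀,x₁,x₂] vanish at all six). Then the k-vector space of homogeneous polynomials of degree 3 in k[x₀,x₁,x₂] vanishing at all eight points has dimension exactly 2. -/
/-!
Plane cubics form a space of dimension `C(5, 3) = 10`, so it suffices that evaluation at the
eight points maps it onto `k⁸`. Given `P i`, choose two other points `P j`, `P l`: the line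
through them misses `P i` (no three collinear), and a conic through the five remaining points
misses `P i` as well (no six on a conic). Their product is a cubic vanishing at every point
but `P i`.
-/

open MvPolynomial Module Submodule Finset

namespace Submodule

variable {K V ι : Type*} [Field K] [AddCommGroup V] [Module K V]
  (W : Submodule K V) (ℓ : ι → V →ₗ[K] K)

theorem exists_ne_zero_forall_eq_zero_of_card_lt_finrank [FiniteDimensional K W] {S : Finset ι}
    (hS : #S < finrank K W) : ∃ w ∈ W, w ≠ 0 ∧ ∀ i ∈ S, ℓ i w = 0 := by
  obtain ⟨w, hw, hw0⟩ := (Submodule.ne_bot_iff _).1 <|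
    (LinearMap.pi fun i : S => ℓ i ∘ₗ W.subtype).ker_ne_bot_of_finrank_lt (by simpa using hS)
  exact ⟨w, w.2, by simpa using hw0, fun i hi => congr_fun (LinearMap.mem_ker.1 hw) ⟨i, hi⟩⟩

theorem range_pi_domRestrict_eq_top [Finite ι]
    (hsep : ∀ i, ∃ w ∈ W, ℓ i w ≠ 0 ∧ ∀ j ≠ i, ℓ j w = 0) :
    LinearMap.range ((LinearMap.pi ℓ).domRestrict W) = ⊤ := by
  classical
  rw [eq_top_iff, ← (Pi.basisFun K ι).span_eq, span_le, Set.range_subset_iff]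
  intro i
  obtain ⟨w, hw, hwi, hwj⟩ := hsep i
  have hsingle : LinearMap.pi ℓ w = Pi.single i (ℓ i w) := by
    ext j
    by_cases hji : j = i
    · subst hji; simp
    · simp [hji, hwj j hji]
  refine ⟨(ℓ i w)⁻¹ • ⟨w, hw⟩, ?_⟩
  simp [hsingle, Pi.basisFun_apply, ← Pi.single_smul, hwi]

theorem finrank_inf_iInf_ker_add_card [FiniteDimensional K W] [Fintype ι]
    (hsep : ∀ i, ∃ w ∈ W, ℓ i w ≠ 0 ∧ ∀ j ≠ i, ℓ j w = 0) :
    finrank K ↥(W ⊓ ⨅ i, LinearMap.ker (ℓ i)) + Fintype.card ι = finrank K W := by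
  have hker : (LinearMap.ker ((LinearMap.pi ℓ).domRestrict W)).map W.subtype =
      W ⊓ ⨅ i, LinearMap.ker (ℓ i) := by
    rw [LinearMap.ker_domRestrict, LinearMap.ker_pi, map_comap_subtype]
  rw [← hker, finrank_map_subtype_eq, ← finrank_fintype_fun_eq_card (R := K),
    ← finrank_top K (ι → K), ← range_pi_domRestrict_eq_top W ℓ hsep, add_comm,
    LinearMap.finrank_range_add_finrank_ker]

end Submodule

namespace MvPolynomial

instance {σ R : Type*} [Finite σ] [CommSemiring R] (n : ℕ) :
    Module.Finite R (homogeneousSubmodule σ R n) :=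
  Module.Finite.iff_fg.2 (homogeneousSubmodule_fg σ R n)

theorem finrank_homogeneousSubmodule {σ R : Type*} [Fintype σ] [CommRing R]
    [StrongRankCondition R] (n : ℕ) :
    finrank R (homogeneousSubmodule σ R n) = (Fintype.card σ + n - 1).choose n := by
  classical
  have hmonomials :
      {d : σ →₀ ℕ | d.degree = n} = (univ.finsuppAntidiag n : Finset (σ →₀ ℕ)) := by
    ext d
    simp [Finsupp.degree_eq_sum]
  rw [homogeneousSubmodule_eq_finsupp_supported, hmonomials,
    (AddMonoidAlgebra.supportedEquivFinsupp _).finrank_eq, finrank_finsupp_self]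
  simp only [coe_sort_coe, Fintype.card_coe, card_finsuppAntidiag_nat_eq_choose, card_univ]

theorem exists_homogeneous_ne_zero_forall_eval_eq_zero {σ k ι : Type*} [Fintype σ] [Field k]
    (P : ι → σ → k) {d : ℕ} {S : Finset ι} (hS : #S < (Fintype.card σ + d - 1).choose d) :
    ∃ f ∈ homogeneousSubmodule σ k d, f ≠ 0 ∧ ∀ i ∈ S, eval (P i) f = 0 :=
  (homogeneousSubmodule σ k d).exists_ne_zero_forall_eq_zero_of_card_lt_finrank
    (fun i => (aeval (P i)).toLinearMap) (by rwa [finrank_homogeneousSubmodule])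

end MvPolynomial

theorem exists_cubic_eval_ne_zero_forall_ne_eval_eq_zero {k ι : Type*} [Field k] [Fintype ι]
    [DecidableEq ι] (hcard : Fintype.card ι ≤ 8) (P : ι → Fin 3 → k) {i j l : ι}
    (hij : i ≠ j) (hil : i ≠ l) (hjl : j ≠ l)
    (hline : ∀ f ∈ homogeneousSubmodule (Fin 3) k 1, f ≠ 0 →
      eval (P j) f = 0 → eval (P l) f = 0 → eval (P i) f ≠ 0)
    (hconic : ∀ g ∈ homogeneousSubmodule (Fin 3) k 2, g ≠ 0 →
      ¬ ∀ m ∉ ({j, l} : Finset ι), eval (P m) g = 0) :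
    ∃ w ∈ homogeneousSubmodule (Fin 3) k 3,
      eval (P i) w ≠ 0 ∧ ∀ m ≠ i, eval (P m) w = 0 := by
  obtain ⟨f, hf, hf0, hfv⟩ := exists_homogeneous_ne_zero_forall_eval_eq_zero P
    (d := 1) (S := {j, l}) (card_le_two.trans_lt (by simp))
  have hrest : #(univ \ {i, j, l}) < 6 := by
    rw [card_sdiff_of_subset (subset_univ _), card_eq_three.2 ⟨i, j, l, hij, hil, hjl, rfl⟩,
      card_univ]
    omega
  obtain ⟨g, hg, hg0, hgv⟩ := exists_homogeneous_ne_zero_forall_eval_eq_zero P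
    (d := 2) (by simpa [Nat.choose] using hrest)
  refine ⟨f * g, hf.mul hg, ?_, fun m hmi => ?_⟩
  · have hgi : eval (P i) g ≠ 0 := fun hgi => hconic g hg hg0 fun m hm => by
      by_cases hmi : m = i
      · rwa [hmi]
      · exact hgv m (by simp_all)
    simpa using ⟨hline f hf hf0 (hfv j (by simp)) (hfv l (by simp)), hgi⟩
  · by_cases hm : m = j ∨ m = l
    · rcases hm with rfl | rfl <;> simp [hfv]
    · simp [hgv m (by simp_all)]

theorem dim_cubics_through_eight_general_points_general
    {k : Type*} [Field k] (P : Fin 8 → Fin 3 → k)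
    (hline : ∀ i j l : Fin 8, i ≠ j → j ≠ l → i ≠ l →
      ∀ f : MvPolynomial (Fin 3) k, f ∈ homogeneousSubmodule (Fin 3) k 1 → f ≠ 0 →
        ¬ (eval (P i) f = 0 ∧ eval (P j) f = 0 ∧ eval (P l) f = 0))
    (hconic : ∀ S : Finset (Fin 8), S.card = 6 →
      ∀ f : MvPolynomial (Fin 3) k, f ∈ homogeneousSubmodule (Fin 3) k 2 → f ≠ 0 →
        ¬ (∀ i ∈ S, eval (P i) f = 0)) :
    Module.finrank k
      ↥(homogeneousSubmodule (Fin 3) k 3 ⊓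
        ⨅ i, LinearMap.ker ((aeval (P i) : MvPolynomial (Fin 3) k →ₐ[k] k).toLinearMap)) = 2 := by
  have hsep (i : Fin 8) : ∃ w ∈ homogeneousSubmodule (Fin 3) k 3,
      eval (P i) w ≠ 0 ∧ ∀ m ≠ i, eval (P m) w = 0 := by
    obtain ⟨j, l, hij, hil, hjl⟩ : ∃ j l : Fin 8, i ≠ j ∧ i ≠ l ∧ j ≠ l := by
      revert i; decide
    refine exists_cubic_eval_ne_zero_forall_ne_eval_eq_zero (by simp) P hij hil hjl
      (fun f hf hf0 hj hl hi => hline i j l hij hjl hil f hf hf0 ⟨hi, hj, hl⟩)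
      fun g hg hg0 hvan => hconic (univ \ {j, l}) ?_ g hg hg0 fun m hm => hvan m (by simpa using hm)
    rw [card_sdiff_of_subset (subset_univ _), card_pair hjl, card_univ, Fintype.card_fin]
  have hdim := (homogeneousSubmodule (Fin 3) k 3).finrank_inf_iInf_ker_add_card
    (fun i => (aeval (P i)).toLinearMap) hsep
  rw [finrank_homogeneousSubmodule, Fintype.card_fin, Fintype.card_fin,
    show Nat.choose (3 + 3 - 1) 3 = 10 by decide] at hdim
  omega

/-- For eight distinct points of `ℙ²(k)` in general position (no three collinear, no six
on a conic), the space of plane cubics through the eight points has dimension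
`10 - 8 = 2`. -/
theorem dim_cubics_through_eight_general_points
    {k : Type*} [Field k] (P : Fin 8 → Fin 3 → k)
    (hP0 : ∀ i, P i ≠ 0)
    (hdist : ∀ i j, i ≠ j → ¬ ∃ c : k, P j = c • P i)
    (hline : ∀ i j l : Fin 8, i ≠ j → j ≠ l → i ≠ l →
      ∀ f : MvPolynomial (Fin 3) k, f ∈ homogeneousSubmodule (Fin 3) k 1 → f ≠ 0 →
        ¬ (eval (P i) f = 0 ∧ eval (P j) f = 0 ∧ eval (P l) f = 0))
    (hconic : ∀ S : Finset (Fin 8), S.card = 6 →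
      ∀ f : MvPolynomial (Fin 3) k, f ∈ homogeneousSubmodule (Fin 3) k 2 → f ≠ 0 →
        ¬ (∀ i ∈ S, eval (P i) f = 0)) :
    Module.finrank k
      ↥(homogeneousSubmodule (Fin 3) k 3 ⊓
        ⨅ i, LinearMap.ker ((aeval (P i) : MvPolynomial (Fin 3) k →ₐ[k] k).toLinearMap)) = 2 :=
  dim_cubics_through_eight_general_points_general P hline hconic
end

section
/- Let S be any nonempty subset of {1, …, 9} of even cardinality. Then the number of unordered pairs {A, B} of distinct subsets of {1, …, 9}, each of cardinality 3 or 7, whose symmetric difference A Δ B equals S, is exactly 28. -/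
/-!
A pair `{A, B}` with `A ∆ B = S` is determined by either member, since `B = A ∆ S`; so the
pairs are the images of `A ↦ {A, A ∆ S}` on the sets `A` with `|A|, |A ∆ S| ∈ {3, 7}`, and
`S ≠ ∅` makes the two members distinct. A permutation of the ground set transports pairs for `S`
to pairs for its image, so the count depends only on `|S| ∈ {2, 4, 6, 8}`, and one
representative of each size is counted by evaluation.
-/

open Finset

variable {α β : Type*} [DecidableEq α] [DecidableEq β]

def symmDiffPairs (p : ℕ → Prop) (S : Finset α) : Set (Finset (Finset α)) :=
  {P | ∃ A B : Finset α, A ≠ B ∧ P = {A, B} ∧ p #A ∧ p #B ∧ symmDiff A B = S}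

def symmDiffPartners [Fintype α] (p : ℕ → Prop) [DecidablePred p] (S : Finset α) :
    Finset (Finset α) :=
  {A | p #A ∧ p #(symmDiff A S)}

theorem image_mem_symmDiffPairs (e : α ≃ β) {p : ℕ → Prop} {S : Finset α}
    {P : Finset (Finset α)} (hP : P ∈ symmDiffPairs p S) :
    P.image (image e) ∈ symmDiffPairs p (S.image e) := by
  obtain ⟨A, B, hAB, rfl, hA, hB, rfl⟩ := hP
  refine ⟨A.image e, B.image e, (image_injective e.injective).ne hAB,
    by rw [image_insert, image_singleton], ?_, ?_, (image_symmDiff _ _ e.injective).symm⟩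
  · rwa [card_image_of_injective _ e.injective]
  · rwa [card_image_of_injective _ e.injective]

theorem ncard_symmDiffPairs_le_image [Fintype β] (e : α ≃ β) (p : ℕ → Prop) (S : Finset α) :
    (symmDiffPairs p S).ncard ≤ (symmDiffPairs p (S.image e)).ncard :=
  Set.ncard_le_ncard_of_injOn _ (fun _ => image_mem_symmDiffPairs e)
    (image_injective (image_injective e.injective)).injOn

theorem ncard_symmDiffPairs_image [Fintype α] [Fintype β] (e : α ≃ β) (p : ℕ → Prop)
    (S : Finset α) : (symmDiffPairs p (S.image e)).ncard = (symmDiffPairs p S).ncard := by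
  refine le_antisymm ?_ (ncard_symmDiffPairs_le_image e p S)
  simpa [image_image] using ncard_symmDiffPairs_le_image e.symm p (S.image e)

theorem exists_perm_image_eq [Fintype α] {s t : Finset α} (h : #s = #t) :
    ∃ σ : Equiv.Perm α, s.image σ = t := by
  let σ : Equiv.Perm α := Equiv.subtypeCongr (equivOfCardEq h)
    (Fintype.equivOfCardEq (by simp [Fintype.card_subtype_compl, h]))
  refine ⟨σ, eq_of_subset_of_card_le ?_ (card_image_of_injective s σ.injective ▸ h).ge⟩
  intro y hy
  obtain ⟨x, hx, rfl⟩ := mem_image.mp hy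
  simp [σ, Equiv.subtypeCongr, Equiv.sumCompl_symm_apply_of_pos hx]

theorem ncard_symmDiffPairs_eq_of_card_eq [Fintype α] (p : ℕ → Prop) {S T : Finset α}
    (h : #S = #T) : (symmDiffPairs p S).ncard = (symmDiffPairs p T).ncard := by
  obtain ⟨σ, rfl⟩ := exists_perm_image_eq h
  exact (ncard_symmDiffPairs_image σ p S).symm

theorem symmDiffPairs_eq_image [Fintype α] (p : ℕ → Prop) [DecidablePred p] {S : Finset α}
    (hS : S.Nonempty) :
    symmDiffPairs p S =
      ↑((symmDiffPartners p S).image fun A => ({A, symmDiff A S} : Finset (Finset α))) := by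
  ext P
  simp only [symmDiffPairs, symmDiffPartners, Set.mem_ofPred_eq, coe_image, Set.mem_image,
    mem_coe, mem_filter, mem_univ, true_and]
  constructor
  · rintro ⟨A, B, -, rfl, hA, hB, rfl⟩
    exact ⟨A, ⟨hA, by rwa [symmDiff_symmDiff_cancel_left]⟩, by rw [symmDiff_symmDiff_cancel_left]⟩
  · rintro ⟨A, ⟨hA, hAS⟩, rfl⟩
    refine ⟨A, symmDiff A S, fun h => hS.ne_empty ?_, rfl, hA, hAS,
      symmDiff_symmDiff_cancel_left A S⟩
    exact symmDiff_eq_left.mp h.symm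

/-- Combinatorial Steiner complex structure on the 120 tritangents: for any nonempty
subset `S` of a 9-element set of even cardinality, there are exactly 28 unordered pairs
`{A, B}` of distinct subsets, each of cardinality 3 or 7, with symmetric difference
`A ∆ B = S`. -/
theorem steiner_block_card_28 (S : Finset (Fin 9)) (hS : S.Nonempty) (hEven : Even S.card) :
    Nat.card {P : Finset (Finset (Fin 9)) //
      ∃ A B : Finset (Fin 9), A ≠ B ∧ P = {A, B} ∧
        (A.card = 3 ∨ A.card = 7) ∧ (B.card = 3 ∨ B.card = 7) ∧
        symmDiff A B = S} = 28 := by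
  let p : ℕ → Prop := fun n => n = 3 ∨ n = 7
  change Nat.card (symmDiffPairs p S) = 28
  have count (S₀ : Finset (Fin 9)) (hS₀ : S₀.Nonempty) (hcard : #S₀ = #S)
      (h28 : #((symmDiffPartners p S₀).image fun A => ({A, symmDiff A S₀} : Finset _)) = 28) :
      Nat.card (symmDiffPairs p S) = 28 := by
    rwa [Nat.card_coe_set_eq, ncard_symmDiffPairs_eq_of_card_eq p hcard.symm,
      symmDiffPairs_eq_image p hS₀, Set.ncard_coe_finset]
  have hle : #S ≤ 9 := card_le_univ S |>.trans_eq (Fintype.card_fin 9)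
  have hpos : 0 < #S := card_pos.mpr hS
  obtain ⟨k, hk⟩ := hEven
  obtain h | h | h | h : #S = 2 ∨ #S = 4 ∨ #S = 6 ∨ #S = 8 := by omega
  · exact count {0, 1} (by decide) (by rw [h]; rfl) (by decide)
  · exact count {0, 1, 2, 3} (by decide) (by rw [h]; rfl) (by decide)
  · exact count {0, 1, 2, 3, 4, 5} (by decide) (by rw [h]; rfl) (by decide)
  · exact count {0, 1, 2, 3, 4, 5, 6, 7} (by decide) (by rw [h]; rfl) (by decide)
end
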